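/- arXiv:2212.13931 — 3 statements merged into one kernel-verified Lean document; each statement's English description precedes it below -/
import Mathlib

section
/- If X is an exponential random variable with rate λ_D and Y is an exponential random variable with rate λ_E, independent, then for any x ≥ 1, P[(1+X)/(1+Y) ≤ x] = 1 - (λ_E · e^{-λ_D(x-1)})/(x·λ_D + λ_E). -/
open MeasureTheory ProbabilityTheory Real Set

lemma expM_apply (r : ℝ) {s : Set ℝ} (hs : MeasurableSet s) :
    expMeasure r s = ∫⁻ x in s, exponentialPDF r x := by
  rw [expMeasure, gammaMeasure, withDensity_apply _ hs]; rfl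

lemma expM_Iio (r : ℝ) : expMeasure r (Iio 0) = 0 := by
  rw [expM_apply r measurableSet_Iio]
  exact lintegral_exponentialPDF_of_nonpos le_rfl

lemma expM_Iic {r : ℝ} (hr : 0 < r) {t : ℝ} (ht : 0 ≤ t) :
    expMeasure r (Iic t) = ENNReal.ofReal (1 - rexp (-(r * t))) := by
  rw [expM_apply r measurableSet_Iic, lintegral_exponentialPDF_eq_antiDeriv hr, if_pos ht]

lemma expM_Ioi {r : ℝ} (hr : 0 < r) {t : ℝ} (ht : 0 ≤ t) :
    expMeasure r (Ioi t) = ENNReal.ofReal (rexp (-(r * t))) := by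
  have := isProbabilityMeasure_expMeasure hr
  rw [← compl_Iic, measure_compl measurableSet_Iic (measure_ne_top _ _), measure_univ,
    expM_Iic hr ht]
  rw [ENNReal.sub_eq_of_eq_add (by simp) ?_]
  rw [← ENNReal.ofReal_one, ← ENNReal.ofReal_add (by positivity) (by
    have := exp_le_one_iff.2 (by nlinarith : -(r*t) ≤ 0); linarith)]
  ring_nf

lemma int_exp {b : ℝ} (hb : 0 < b) : ∫ y in Ioi (0:ℝ), rexp (-(b * y)) = 1 / b := by
  have := integral_comp_mul_left_Ioi (fun x => rexp (-x)) 0 hb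
  simp only [mul_zero] at this
  calc ∫ y in Ioi (0:ℝ), rexp (-(b * y)) = b⁻¹ • ∫ x in Ioi (0:ℝ), rexp (-x) := this
    _ = 1 / b := by rw [integral_exp_neg_Ioi_zero]; simp [one_div]

/-- `X` is an exponential random variable with rate `r` under `P`. -/
def IsExpRV {Ω : Type*} [MeasurableSpace Ω] (P : Measure Ω) (r : ℝ) (X : Ω → ℝ) : Prop :=
  Measurable X ∧ P.map X = expMeasure r

theorem ratio_cdf_single_eavesdropper
    {Ω : Type*} [MeasurableSpace Ω] (P : Measure Ω) [IsProbabilityMeasure P]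
    (X Y : Ω → ℝ) (lamD lamE : ℝ) (hD : 0 < lamD) (hE : 0 < lamE)
    (hX : IsExpRV P lamD X) (hY : IsExpRV P lamE Y)
    (hindep : IndepFun X Y P) :
    ∀ x : ℝ, 1 ≤ x →
      (P {ω | (1 + X ω) / (1 + Y ω) ≤ x}).toReal
        = 1 - lamE * Real.exp (-lamD * (x - 1)) / (x * lamD + lamE) := by
  intro x hx
  obtain ⟨mX, hmapX⟩ := hX
  obtain ⟨mY, hmapY⟩ := hY
  haveI hPD : IsProbabilityMeasure (expMeasure lamD) := isProbabilityMeasure_expMeasure hD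
  haveI hPE : IsProbabilityMeasure (expMeasure lamE) := isProbabilityMeasure_expMeasure hE
  set q : ℝ := lamE * Real.exp (-lamD * (x - 1)) / (x * lamD + lamE) with hq
  have hb : 0 < lamE + lamD * x := by nlinarith
  have hq0 : 0 ≤ q := by positivity
  have hq1 : q ≤ 1 := by
    rw [hq, div_le_one (by nlinarith)]
    have h1 : Real.exp (-lamD * (x - 1)) ≤ 1 := exp_le_one_iff.2 (by nlinarith)
    nlinarith
  -- a.s. nonnegativity
  have hXn : P {ω | X ω < 0} = 0 := by
    have : {ω | X ω < 0} = X ⁻¹' (Iio 0) := rfl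
    rw [this, ← Measure.map_apply mX measurableSet_Iio, hmapX, expM_Iio]
  have hYn : P {ω | Y ω < 0} = 0 := by
    have : {ω | Y ω < 0} = Y ⁻¹' (Iio 0) := rfl
    rw [this, ← Measure.map_apply mY measurableSet_Iio, hmapY, expM_Iio]
  have hA : P ({ω | 0 ≤ X ω} ∩ {ω | 0 ≤ Y ω})ᶜ = 0 := by
    rw [Set.compl_inter]
    refine measure_union_null ?_ ?_
    · simpa [Set.compl_setOf, not_le] using hXn
    · simpa [Set.compl_setOf, not_le] using hYn
  -- replace the event
  have hset : P {ω | (1 + X ω) / (1 + Y ω) ≤ x} = P {ω | X ω ≤ x * Y ω + (x - 1)} := by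
    rw [← measure_inter_conull (s := {ω | (1 + X ω) / (1 + Y ω) ≤ x}) hA,
        ← measure_inter_conull (s := {ω | X ω ≤ x * Y ω + (x - 1)}) hA]
    congr 1
    ext ω
    simp only [Set.mem_inter_iff, Set.mem_setOf_eq, and_congr_left_iff]
    rintro ⟨hx0, hy0⟩
    rw [div_le_iff₀ (by linarith : (0:ℝ) < 1 + Y ω)]
    constructor <;> intro h <;> nlinarith
  -- joint law
  have hpair : P.map (fun ω => (Y ω, X ω)) = (expMeasure lamE).prod (expMeasure lamD) := by
    rw [← hmapY, ← hmapX]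
    exact (indepFun_iff_map_prod_eq_prod_map_map mY.aemeasurable mX.aemeasurable).1 hindep.symm
  set s : Set (ℝ × ℝ) := {p : ℝ × ℝ | p.2 ≤ x * p.1 + (x - 1)} with hsdef
  have hs : MeasurableSet s := measurableSet_le measurable_snd (by fun_prop)
  have hQ : P {ω | X ω ≤ x * Y ω + (x - 1)}
      = ((expMeasure lamE).prod (expMeasure lamD)) s := by
    rw [← hpair, Measure.map_apply (mY.prodMk mX) hs]
    rfl
  -- complement value
  have hcval : ((expMeasure lamE).prod (expMeasure lamD)) sᶜ = ENNReal.ofReal q := by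
    rw [Measure.prod_apply hs.compl]
    have hae : ∀ᵐ y ∂(expMeasure lamE),
        expMeasure lamD (Prod.mk y ⁻¹' sᶜ)
          = ENNReal.ofReal (rexp (-(lamD * (x * y + (x - 1))))) := by
      have h0 : ∀ᵐ y ∂(expMeasure lamE), 0 ≤ y := by
        rw [ae_iff]
        simpa [not_le, Set.Iio_def] using expM_Iio lamE
      filter_upwards [h0] with y hy
      have hpre : Prod.mk y ⁻¹' sᶜ = Ioi (x * y + (x - 1)) := by
        ext a; simp [hsdef, not_le]
      rw [hpre, expM_Ioi hD (by nlinarith)]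
    rw [lintegral_congr_ae hae]
    have hwd : expMeasure lamE = volume.withDensity (exponentialPDF lamE) := rfl
    have mpdf : Measurable (exponentialPDF lamE) :=
      (measurable_exponentialPDFReal lamE).ennreal_ofReal
    have mg : Measurable fun y : ℝ => ENNReal.ofReal (rexp (-(lamD * (x * y + (x - 1))))) := by
      fun_prop
    rw [hwd, lintegral_withDensity_eq_lintegral_mul _ mpdf mg]
    have hsplit : ∫⁻ y, (exponentialPDF lamE * fun y =>
          ENNReal.ofReal (rexp (-(lamD * (x * y + (x - 1)))))) y
        = ∫⁻ y in Ici (0:ℝ), ENNReal.ofReal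
            (lamE * rexp (-(lamE * y)) * rexp (-(lamD * (x * y + (x - 1))))) := by
      rw [← lintegral_add_compl _ measurableSet_Ici (μ := volume)]
      have h1 : ∫⁻ y in (Ici (0:ℝ))ᶜ, (exponentialPDF lamE * fun y =>
          ENNReal.ofReal (rexp (-(lamD * (x * y + (x - 1)))))) y = 0 := by
        rw [compl_Ici]
        refine (setLIntegral_congr_fun measurableSet_Iio (fun y hy => ?_)).trans
          lintegral_zero
        simp only [Pi.mul_apply]
        rw [exponentialPDF_of_neg hy, zero_mul]
      rw [h1, add_zero]
      refine setLIntegral_congr_fun measurableSet_Ici (fun y hy => ?_)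
      simp only [Pi.mul_apply]
      rw [exponentialPDF_of_nonneg hy, ← ENNReal.ofReal_mul (by positivity)]
    rw [hsplit]
    have hfun : ∀ y : ℝ, lamE * rexp (-(lamE * y)) * rexp (-(lamD * (x * y + (x - 1))))
        = (lamE * rexp (-lamD * (x - 1))) * rexp (-((lamE + lamD * x) * y)) := by
      intro y
      rw [mul_assoc, ← Real.exp_add, mul_assoc, ← Real.exp_add]
      congr 2
      ring
    simp only [hfun]
    rw [← ofReal_integral_eq_lintegral_ofReal]
    · rw [MeasureTheory.integral_Ici_eq_integral_Ioi, MeasureTheory.integral_const_mul, int_exp hb, hq]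
      congr 1
      field_simp
      ring
    · rw [← IntegrableOn, integrableOn_Ici_iff_integrableOn_Ioi]
      exact ((exp_neg_integrableOn_Ioi 0 hb).congr_fun
        (fun y _ => by rw [neg_mul]) measurableSet_Ioi).const_mul _
    · exact ae_of_all _ fun y => by positivity
  -- put it together
  haveI : IsProbabilityMeasure ((expMeasure lamE).prod (expMeasure lamD)) := by infer_instance
  have hms : ((expMeasure lamE).prod (expMeasure lamD)) s = 1 - ENNReal.ofReal q := by
    have := measure_compl (μ := (expMeasure lamE).prod (expMeasure lamD)) hs (measure_ne_top _ s)
    rw [hcval, measure_univ] at this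
    have hle : ((expMeasure lamE).prod (expMeasure lamD)) s ≤ 1 := prob_le_one
    rw [← ENNReal.sub_sub_cancel ENNReal.one_ne_top hle, this]
  rw [hset, hQ, hms, ← ENNReal.ofReal_one, ← ENNReal.ofReal_sub _ hq0,
    ENNReal.toReal_ofReal (by linarith)]
end

section
/- Let Z_1,…,Z_N be i.i.d. random variables, each equal to (1+X_n)/(1+Y_n) with X_n ~ Exp(λ_D), Y_n ~ Exp(λ_E) independent. Then for y ≥ 1, P[max_n Z_n ≤ y] = (1 − λ_E e^{−λ_D(y−1)}/(yλ_D + λ_E))^N. -/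
open MeasureTheory ProbabilityTheory Real Finset

lemma expMeasure_eq' (r : ℝ) : expMeasure r = volume.withDensity (exponentialPDF r) := rfl

lemma expMeasure_Iic {r : ℝ} (hr : 0 < r) {c : ℝ} (hc : 0 ≤ c) :
    expMeasure r (Set.Iic c) = ENNReal.ofReal (1 - Real.exp (-(r * c))) := by
  rw [expMeasure_eq', withDensity_apply _ measurableSet_Iic,
    lintegral_exponentialPDF_eq_antiDeriv hr, if_pos hc]

lemma expMeasure_neg {r : ℝ} : expMeasure r (Set.Iio 0) = 0 := by
  rw [expMeasure_eq', withDensity_apply _ measurableSet_Iio]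
  exact lintegral_exponentialPDF_of_nonpos le_rfl

lemma lintegral_exp_expMeasure {r a : ℝ} (hr : 0 < r) (ha : 0 ≤ a) :
    ∫⁻ t, ENNReal.ofReal (Real.exp (-(a * t))) ∂(expMeasure r)
      = ENNReal.ofReal (r / (a + r)) := by
  have hk : 0 < a + r := by linarith
  have hpdf : Measurable (exponentialPDF r) := (measurable_exponentialPDFReal r).ennreal_ofReal
  have hg : Measurable (fun t : ℝ => ENNReal.ofReal (Real.exp (-(a * t)))) := by
    apply Measurable.ennreal_ofReal; fun_prop
  rw [expMeasure_eq', lintegral_withDensity_eq_lintegral_mul _ hpdf hg]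
  have heq : ∀ t : ℝ, (exponentialPDF r * fun t => ENNReal.ofReal (Real.exp (-(a * t)))) t
      = (Set.Ici (0:ℝ)).indicator (fun t => ENNReal.ofReal (r * Real.exp (-((a + r) * t)))) t := by
    intro t
    simp only [Pi.mul_apply, exponentialPDF_eq, Set.indicator, Set.mem_Ici]
    split_ifs with h
    · rw [← ENNReal.ofReal_mul (by positivity)]
      congr 1
      rw [mul_assoc, ← Real.exp_add]
      ring_nf
    · simp
  simp_rw [heq]
  rw [lintegral_indicator measurableSet_Ici _,
    ← Measure.restrict_congr_set MeasureTheory.Ioi_ae_eq_Ici,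
    ← ofReal_integral_eq_lintegral_ofReal]
  · congr 1
    have : ∀ x : ℝ, r * Real.exp (-((a + r) * x)) = r * ((fun u => Real.exp (-u)) ((a+r) * x)) := by
      intro x; simp
    simp_rw [this]
    rw [integral_const_mul, integral_comp_mul_left_Ioi (fun u => Real.exp (-u)) 0 hk,
      mul_zero, integral_exp_neg_Ioi_zero, smul_eq_mul, mul_one]
    field_simp
  · have : IntegrableOn (fun x => Real.exp (-(a+r) * x)) (Set.Ioi 0) := exp_neg_integrableOn_Ioi 0 hk
    simp_rw [neg_mul] at this
    exact this.const_mul r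
  · exact Filter.Eventually.of_forall fun x => by positivity

lemma prod_measure_ratio {lamD lamE : ℝ} (hD : 0 < lamD) (hE : 0 < lamE) {y : ℝ} (hy : 1 ≤ y) :
    (expMeasure lamE).prod (expMeasure lamD) {p : ℝ × ℝ | (1 + p.2) / (1 + p.1) ≤ y}
      = ENNReal.ofReal (1 - lamE * Real.exp (-lamD * (y - 1)) / (y * lamD + lamE)) := by
  haveI := isProbabilityMeasure_expMeasure hD
  haveI := isProbabilityMeasure_expMeasure hE
  have hB : MeasurableSet {p : ℝ × ℝ | (1 + p.2) / (1 + p.1) ≤ y} := by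
    apply measurableSet_le _ measurable_const
    fun_prop
  rw [Measure.prod_apply hB]
  have hae : ∀ᵐ t ∂(expMeasure lamE), 0 ≤ t := by
    rw [ae_iff]
    convert expMeasure_neg (r := lamE) using 2
    ext t; simp [not_le]
  have hcongr : (fun t => expMeasure lamD (Prod.mk t ⁻¹' {p : ℝ × ℝ | (1 + p.2) / (1 + p.1) ≤ y}))
      =ᵐ[expMeasure lamE]
      (fun t => ENNReal.ofReal 1 - ENNReal.ofReal (Real.exp (-(lamD * (y * (1 + t) - 1))))) := by
    filter_upwards [hae] with t ht
    have h1t : (0:ℝ) < 1 + t := by linarith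
    have hslice : Prod.mk t ⁻¹' {p : ℝ × ℝ | (1 + p.2) / (1 + p.1) ≤ y}
        = Set.Iic (y * (1 + t) - 1) := by
      ext s
      simp only [Set.mem_preimage, Set.mem_setOf_eq, Set.mem_Iic, div_le_iff₀ h1t]
      constructor <;> intro h <;> nlinarith
    have hc : 0 ≤ y * (1 + t) - 1 := by nlinarith
    rw [hslice, expMeasure_Iic hD hc, ENNReal.ofReal_sub _ (Real.exp_pos _).le]
  rw [lintegral_congr_ae hcongr]
  have hexp_le : ∀ᵐ t ∂(expMeasure lamE),
      ENNReal.ofReal (Real.exp (-(lamD * (y * (1 + t) - 1)))) ≤ ENNReal.ofReal 1 := by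
    filter_upwards [hae] with t ht
    apply ENNReal.ofReal_le_ofReal
    rw [Real.exp_le_one_iff]
    nlinarith [mul_nonneg hD.le (show (0:ℝ) ≤ y * (1 + t) - 1 by nlinarith)]
  have hexp_eq : ∀ t : ℝ, Real.exp (-(lamD * (y * (1 + t) - 1)))
      = Real.exp (-(lamD * (y - 1))) * Real.exp (-((lamD * y) * t)) := by
    intro t; rw [← Real.exp_add]; ring_nf
  have hJ : ∫⁻ t, ENNReal.ofReal (Real.exp (-(lamD * (y * (1 + t) - 1)))) ∂(expMeasure lamE)
      = ENNReal.ofReal (Real.exp (-(lamD * (y - 1))) * (lamE / (lamD * y + lamE))) := by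
    simp_rw [hexp_eq]
    simp_rw [ENNReal.ofReal_mul (Real.exp_pos (-(lamD * (y - 1)))).le]
    rw [lintegral_const_mul' _ _ ENNReal.ofReal_ne_top,
      lintegral_exp_expMeasure hE (by positivity)]
  have hmeas : Measurable (fun t : ℝ => ENNReal.ofReal (Real.exp (-(lamD * (y * (1 + t) - 1))))) := by
    apply Measurable.ennreal_ofReal; fun_prop
  rw [lintegral_sub hmeas (by rw [hJ]; exact ENNReal.ofReal_ne_top) hexp_le, hJ]
  rw [lintegral_const, measure_univ, mul_one,
    ← ENNReal.ofReal_sub _ (by positivity)]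
  congr 1
  rw [neg_mul]
  ring

lemma meas_iInter_pair {Ω : Type*} [MeasurableSpace Ω] {P : Measure Ω} [IsProbabilityMeasure P]
    {N : ℕ} {X Y : Fin N → Ω → ℝ}
    (hXm : ∀ n, Measurable (X n)) (hYm : ∀ n, Measurable (Y n))
    (hindep : iIndepFun (Sum.elim X Y) P)
    {B : Set (ℝ × ℝ)} (hB : MeasurableSet B) (s : Finset (Fin N)) :
    P (⋂ n ∈ s, (fun ω => (Y n ω, X n ω)) ⁻¹' B)
      = ∏ n ∈ s, P ((fun ω => (Y n ω, X n ω)) ⁻¹' B) := by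
  classical
  have hmeas : ∀ i : Fin N ⊕ Fin N, Measurable (Sum.elim X Y i) := by
    rintro (n | n)
    · exact hXm n
    · exact hYm n
  induction s using Finset.induction_on with
  | empty => simp
  | @insert a t ha ih =>
    rw [Finset.prod_insert ha, Finset.set_biInter_insert, ← ih]
    set T : Finset (Fin N ⊕ Fin N) := t.biUnion (fun n => {Sum.inl n, Sum.inr n}) with hT
    have hmem1 : ∀ {n}, n ∈ t → Sum.inl n ∈ T := fun {n} hn =>
      Finset.mem_biUnion.2 ⟨n, hn, by simp⟩
    have hmem2 : ∀ {n}, n ∈ t → Sum.inr n ∈ T := fun {n} hn =>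
      Finset.mem_biUnion.2 ⟨n, hn, by simp⟩
    have hST : Disjoint ({Sum.inr a, Sum.inl a} : Finset (Fin N ⊕ Fin N)) T := by
      rw [Finset.disjoint_left]
      intro i hiS hiT
      simp only [Finset.mem_insert, Finset.mem_singleton] at hiS
      rw [hT, Finset.mem_biUnion] at hiT
      obtain ⟨n, hn, hi⟩ := hiT
      simp only [Finset.mem_insert, Finset.mem_singleton] at hi
      rcases hiS with rfl | rfl <;> rcases hi with hi | hi <;>
        first
          | (cases Sum.inr.inj hi; exact ha hn)
          | (cases Sum.inl.inj hi; exact ha hn)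
          | simp at hi
    set g : (∀ i : ({Sum.inr a, Sum.inl a} : Finset (Fin N ⊕ Fin N)), ℝ) → ℝ × ℝ :=
      fun v => (v ⟨Sum.inr a, by simp⟩, v ⟨Sum.inl a, by simp⟩) with hg
    have hgm : Measurable g := (measurable_pi_apply _).prodMk (measurable_pi_apply _)
    have h1 : IndepFun (fun ω => (Y a ω, X a ω))
        (fun ω (i : T) => Sum.elim X Y i ω) P := by
      have := (hindep.indepFun_finset _ T hST hmeas).comp hgm measurable_id
      exact this
    set C : Set (∀ i : T, ℝ) :=
      ⋂ n, ⋂ (hn : n ∈ t),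
        (fun v : ∀ i : T, ℝ => ((v ⟨Sum.inr n, hmem2 hn⟩ : ℝ), (v ⟨Sum.inl n, hmem1 hn⟩ : ℝ))) ⁻¹' B
      with hC
    have hCm : MeasurableSet C :=
      MeasurableSet.iInter fun n => MeasurableSet.iInter fun hn =>
        hB.preimage ((measurable_pi_apply _).prodMk (measurable_pi_apply _))
    have hpre : (fun ω (i : T) => Sum.elim X Y i ω) ⁻¹' C
        = ⋂ n ∈ t, (fun ω => (Y n ω, X n ω)) ⁻¹' B := by
      ext ω
      simp only [hC, Set.mem_preimage, Set.mem_iInter, Sum.elim_inl, Sum.elim_inr]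
    rw [← hpre]
    exact h1.measure_inter_preimage_eq_mul _ _ hB hCm

/-- Optimal transmitter selection with perfect backhaul and one eavesdropper per
transmitter: the `N` i.i.d. ratios `Z n = (1 + X n)/(1 + Y n)` satisfy
`P[max_n Z n ≤ y] = (1 - λ_E e^{-λ_D (y-1)}/(y λ_D + λ_E))^N` for `y ≥ 1`. -/
theorem cdf_max_ratio_ots
    {Ω : Type*} [MeasurableSpace Ω] (P : Measure Ω) [IsProbabilityMeasure P]
    (N : ℕ) [NeZero N] (lamD lamE : ℝ) (hD : 0 < lamD) (hE : 0 < lamE)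
    (X Y : Fin N → Ω → ℝ)
    (hX : ∀ n, IsExpRV P lamD (X n)) (hY : ∀ n, IsExpRV P lamE (Y n))
    (hindep : iIndepFun (Sum.elim X Y) P) :
    ∀ y : ℝ, 1 ≤ y →
      (P {ω | univ.sup' univ_nonempty (fun n => (1 + X n ω) / (1 + Y n ω)) ≤ y}).toReal
        = (1 - lamE * Real.exp (-lamD * (y - 1)) / (y * lamD + lamE)) ^ N := by
  intro y hy
  have hXm : ∀ n, Measurable (X n) := fun n => (hX n).1
  have hYm : ∀ n, Measurable (Y n) := fun n => (hY n).1
  set B : Set (ℝ × ℝ) := {p : ℝ × ℝ | (1 + p.2) / (1 + p.1) ≤ y} with hBdef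
  have hB : MeasurableSet B := by
    apply measurableSet_le _ measurable_const
    fun_prop
  have hset : {ω | univ.sup' univ_nonempty (fun n => (1 + X n ω) / (1 + Y n ω)) ≤ y}
      = ⋂ n ∈ (univ : Finset (Fin N)), (fun ω => (Y n ω, X n ω)) ⁻¹' B := by
    ext ω
    simp only [Set.mem_setOf_eq, Finset.sup'_le_iff, Set.mem_iInter, Set.mem_preimage, hBdef,
      Finset.mem_univ, forall_true_left]
  rw [hset, meas_iInter_pair hXm hYm hindep hB]
  have hterm : ∀ n : Fin N, P ((fun ω => (Y n ω, X n ω)) ⁻¹' B)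
      = ENNReal.ofReal (1 - lamE * Real.exp (-lamD * (y - 1)) / (y * lamD + lamE)) := by
    intro n
    have hIF : IndepFun (Y n) (X n) P :=
      hindep.indepFun (show (Sum.inr n : Fin N ⊕ Fin N) ≠ Sum.inl n by simp)
    have hmap : P.map (fun ω => (Y n ω, X n ω)) = (expMeasure lamE).prod (expMeasure lamD) := by
      rw [(indepFun_iff_map_prod_eq_prod_map_map (hYm n).aemeasurable
        (hXm n).aemeasurable).1 hIF, (hY n).2, (hX n).2]
    rw [← Measure.map_apply ((hYm n).prodMk (hXm n)) hB, hmap,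
      prod_measure_ratio hD hE hy]
  rw [Finset.prod_congr rfl (fun n _ => hterm n), Finset.prod_const, Finset.card_univ,
    Fintype.card_fin, ENNReal.toReal_pow, ENNReal.toReal_ofReal]
  have h1 : Real.exp (-lamD * (y - 1)) ≤ 1 := by
    rw [Real.exp_le_one_iff]
    nlinarith
  have hden : 0 < y * lamD + lamE := by nlinarith
  have : lamE * Real.exp (-lamD * (y - 1)) / (y * lamD + lamE) ≤ 1 := by
    rw [div_le_one hden]
    nlinarith [Real.exp_pos (-lamD * (y - 1))]
  linarith
end

section
/- For fixed λ_E > 0, the function C(λ_D) = (1/ln 2)·( e^{λ_E+λ_D} Ei(−(λ_E+λ_D)) − e^{λ_D} Ei(−λ_D) ) satisfies C(λ_D) − (1/ln 2)(ln(1/λ_D) − C_Euler + e^{λ_E}Ei(−λ_E)) → 0 as λ_D → 0^+, where C_Euler is the Euler–Mascheroni constant and Ei(−x) = C_Euler + ln x + ∫_0^x (e^{−t}−1)/t dt. -/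
open Real Filter MeasureTheory

/-- `negEi x` denotes `Ei (-x)`, given by
`Ei(-x) = γ + ln x + ∫_0^x (e^{-t} - 1)/t dt`. -/
noncomputable def negEi (x : ℝ) : ℝ :=
  Real.eulerMascheroniConstant + Real.log x + ∫ t in Set.Ioc (0 : ℝ) x, (Real.exp (-t) - 1) / t

namespace AsymptoticESR

noncomputable def f (t : ℝ) : ℝ := (Real.exp (-t) - 1) / t

noncomputable def I (x : ℝ) : ℝ := ∫ t in Set.Ioc (0 : ℝ) x, f t

lemma negEi_eq (x : ℝ) :
    negEi x = Real.eulerMascheroniConstant + Real.log x + I x := rfl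

lemma f_meas : Measurable f :=
  (((Real.continuous_exp.comp continuous_neg).sub continuous_const).measurable).div
    measurable_id

lemma f_bound {t : ℝ} (ht : 0 < t) : ‖f t‖ ≤ 1 := by
  have h1 : Real.exp (-t) ≤ 1 := by
    rw [Real.exp_le_one_iff]; linarith
  have h2 : 1 - t ≤ Real.exp (-t) := by
    have := Real.add_one_le_exp (-t); linarith
  rw [Real.norm_eq_abs, f, abs_div, abs_of_pos ht, abs_of_nonpos (by linarith)]
  rw [div_le_one ht]; linarith

lemma f_integrableOn (b : ℝ) : IntegrableOn f (Set.Icc 0 b) := by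
  rw [integrableOn_Icc_iff_integrableOn_Ioc]
  apply Measure.integrableOn_of_bounded (M := 1) measure_Ioc_lt_top.ne
    f_meas.aestronglyMeasurable
  filter_upwards [ae_restrict_mem measurableSet_Ioc] with t ht
  exact f_bound ht.1

lemma I_contOn (b : ℝ) : ContinuousOn I (Set.Icc 0 b) :=
  intervalIntegral.continuousOn_primitive (f_integrableOn b)

lemma I_zero : I 0 = 0 := by
  simp [I]

lemma I_tendsto_zero : Tendsto I (nhdsWithin 0 (Set.Ioi 0)) (nhds 0) := by
  have h := (I_contOn 1) 0 (by norm_num)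
  rw [ContinuousWithinAt, I_zero] at h
  have : nhdsWithin (0 : ℝ) (Set.Ioi 0) ≤ nhdsWithin 0 (Set.Icc 0 1) := by
    rw [← nhdsWithin_Ioc_eq_nhdsGT (zero_lt_one (α := ℝ))]
    exact nhdsWithin_mono _ Set.Ioc_subset_Icc_self
  exact h.mono_left this

lemma negEi_continuousAt {x : ℝ} (hx : 0 < x) : ContinuousAt negEi x := by
  have hI : ContinuousAt I x := by
    apply (I_contOn (x + 1)).continuousAt
    exact Icc_mem_nhds (by linarith) (by linarith)
  have h : ContinuousAt (fun y : ℝ =>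
      Real.eulerMascheroniConstant + Real.log y + I y) x :=
    (continuousAt_const.add (Real.continuousAt_log hx.ne')).add hI
  exact h

end AsymptoticESR

open AsymptoticESR in
/-- High-SNR affine expansion of the ergodic secrecy rate: as `λ_D → 0⁺`,
`C(λ_D) = (1/ln 2)(e^{λ_E+λ_D} Ei(-(λ_E+λ_D)) - e^{λ_D} Ei(-λ_D))` equals
`(1/ln 2)(ln (1/λ_D) - γ + e^{λ_E} Ei(-λ_E)) + o(1)`. -/
theorem asymptotic_esr (lamE : ℝ) (hE : 0 < lamE) :
    Tendsto (fun lamD : ℝ =>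
        (1 / Real.log 2) * (Real.exp (lamE + lamD) * negEi (lamE + lamD)
            - Real.exp lamD * negEi lamD)
          - (1 / Real.log 2) * (Real.log (1 / lamD) - Real.eulerMascheroniConstant
              + Real.exp lamE * negEi lamE))
      (nhdsWithin 0 (Set.Ioi 0)) (nhds 0) := by
  set γ := Real.eulerMascheroniConstant
  set K := Real.exp lamE * negEi lamE with hK
  -- h1 : first term tends to K
  have hadd : Tendsto (fun d : ℝ => lamE + d) (nhdsWithin 0 (Set.Ioi 0)) (nhds lamE) := by
    have : Tendsto (fun d : ℝ => lamE + d) (nhds 0) (nhds lamE) := by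
      simpa using (continuous_add_left lamE).tendsto (0 : ℝ)
    exact this.mono_left nhdsWithin_le_nhds
  have h1 : Tendsto (fun d : ℝ => Real.exp (lamE + d) * negEi (lamE + d))
      (nhdsWithin 0 (Set.Ioi 0)) (nhds K) := by
    have hc : ContinuousAt (fun x : ℝ => Real.exp x * negEi x) lamE :=
      (Real.continuous_exp.continuousAt).mul (negEi_continuousAt hE)
    exact hc.tendsto.comp hadd
  -- h2 : exp d * negEi d - (γ + log d) → 0
  have hx1 : Tendsto (fun d : ℝ => (Real.exp d - 1) * γ) (nhdsWithin 0 (Set.Ioi 0)) (nhds 0) := by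
    have : Tendsto (fun d : ℝ => (Real.exp d - 1) * γ) (nhds 0) (nhds ((Real.exp 0 - 1) * γ)) :=
      ((Real.continuous_exp.sub continuous_const).mul continuous_const).tendsto 0
    simpa using this.mono_left nhdsWithin_le_nhds
  have hx3 : Tendsto (fun d : ℝ => Real.exp d * I d) (nhdsWithin 0 (Set.Ioi 0)) (nhds 0) := by
    have he : Tendsto (fun d : ℝ => Real.exp d) (nhdsWithin 0 (Set.Ioi 0)) (nhds 1) := by
      simpa using (Real.continuous_exp.tendsto 0).mono_left nhdsWithin_le_nhds
    simpa using he.mul I_tendsto_zero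
  have hx2 : Tendsto (fun d : ℝ => (Real.exp d - 1) * Real.log d)
      (nhdsWithin 0 (Set.Ioi 0)) (nhds 0) := by
    have hslope : Tendsto (fun d : ℝ => (Real.exp d - 1) / d)
        (nhdsWithin 0 (Set.Ioi 0)) (nhds 1) := by
      have h := (Real.hasDerivAt_exp 0)
      rw [hasDerivAt_iff_tendsto_slope] at h
      have h' := h.mono_left
        (nhdsWithin_mono (0:ℝ) (fun x hx => ne_of_gt hx : Set.Ioi 0 ⊆ {(0:ℝ)}ᶜ))
      simp only [Real.exp_zero] at h'
      refine h'.congr' ?_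
      filter_upwards [self_mem_nhdsWithin] with d hd
      simp [slope, hd, div_eq_inv_mul]
    have hmul : Tendsto (fun d : ℝ => d * Real.log d)
        (nhdsWithin 0 (Set.Ioi 0)) (nhds 0) := by
      have := Real.continuous_mul_log.tendsto 0
      simpa using this.mono_left nhdsWithin_le_nhds
    have := hslope.mul hmul
    rw [one_mul] at this
    refine this.congr' ?_
    filter_upwards [self_mem_nhdsWithin] with d hd
    have hd' : (d : ℝ) ≠ 0 := ne_of_gt hd
    field_simp
  have h2 : Tendsto (fun d : ℝ => Real.exp d * negEi d - (γ + Real.log d))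
      (nhdsWithin 0 (Set.Ioi 0)) (nhds 0) := by
    have := (hx1.add hx2).add hx3
    rw [add_zero, add_zero] at this
    refine this.congr (fun d => ?_)
    rw [negEi_eq]
    ring
  -- combine
  have key : Tendsto (fun d : ℝ =>
      (Real.exp (lamE + d) * negEi (lamE + d) - K)
        - (Real.exp d * negEi d - (γ + Real.log d)))
      (nhdsWithin 0 (Set.Ioi 0)) (nhds 0) := by
    have := (h1.sub tendsto_const_nhds (b := K)).sub h2
    simpa using this
  have := key.const_mul (1 / Real.log 2)
  rw [mul_zero] at this
  refine this.congr' ?_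
  filter_upwards [self_mem_nhdsWithin] with d hd
  rw [Real.log_div one_ne_zero (ne_of_gt hd), Real.log_one]
  ring
end
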